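/- The quotient 𝔪' = 𝔤/𝔰 by the subalgebra 𝔰 = span{h, e, f} admits no 𝔰-invariant almost complex structure: there is no linear endomorphism K of 𝔪' with K² = −id satisfying K ∘ ρ'(X) = ρ'(X) ∘ K for all X ∈ 𝔰, where ρ'(X)(v + 𝔰) = [X, v] + 𝔰 is the isotropy representation. -/

import Mathlib

noncomputable section

/-- The underlying space of the 9-dimensional Lie algebra `𝔤`; coordinates are taken
with respect to the ordered basis `z, b, x₁, x₂, x₃, x₄, h, e, f`
(so index 0 = z, 1 = b, 2 = x₁, 3 = x₂, 4 = x₃, 5 = x₄, 6 = h, 7 = e, 8 = f). -/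
def G : Type := Fin 9 → ℝ

instance : AddCommGroup G := inferInstanceAs (AddCommGroup (Fin 9 → ℝ))
instance : Module ℝ G := inferInstanceAs (Module ℝ (Fin 9 → ℝ))

@[simp] lemma G.add_apply (u v : G) (k : Fin 9) : (u + v) k = u k + v k := rfl
@[simp] lemma G.smul_apply (c : ℝ) (u : G) (k : Fin 9) : (c • u) k = c * u k := rfl
@[simp] lemma G.zero_apply (k : Fin 9) : (0 : G) k = 0 := rfl

/-- The Lie bracket of `𝔤` determined by `[b,xᵢ] = xᵢ`, `[b,z] = 2z`, `[h,x₁] = −3x₁`,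
`[h,x₂] = −x₂`, `[h,x₃] = x₃`, `[h,x₄] = 3x₄`, `[f,x₂] = −3x₁`, `[f,x₃] = −2x₂`,
`[f,x₄] = −x₃`, `[e,x₁] = x₂`, `[e,x₂] = 2x₃`, `[e,x₃] = 3x₄`, `[x₁,x₄] = z`,
`[x₂,x₃] = −3z`, `[h,f] = −2f`, `[h,e] = 2e`, `[f,e] = h`, all other brackets of
basis elements being zero. -/
def gb (u v : G) : G := fun k =>
  match k with
  | 0 => -2*(u 0*v 1 - u 1*v 0) + (u 2*v 5 - u 5*v 2) - 3*(u 3*v 4 - u 4*v 3)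
  | 1 => 0
  | 2 => (u 1*v 2 - u 2*v 1) + 3*(u 2*v 6 - u 6*v 2) + 3*(u 3*v 8 - u 8*v 3)
  | 3 => (u 1*v 3 - u 3*v 1) - (u 2*v 7 - u 7*v 2) + (u 3*v 6 - u 6*v 3) + 2*(u 4*v 8 - u 8*v 4)
  | 4 => (u 1*v 4 - u 4*v 1) - 2*(u 3*v 7 - u 7*v 3) - (u 4*v 6 - u 6*v 4) + (u 5*v 8 - u 8*v 5)
  | 5 => (u 1*v 5 - u 5*v 1) - 3*(u 4*v 7 - u 7*v 4) - 3*(u 5*v 6 - u 6*v 5)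
  | 6 => -(u 7*v 8 - u 8*v 7)
  | 7 => 2*(u 6*v 7 - u 7*v 6)
  | 8 => -2*(u 6*v 8 - u 8*v 6)

instance : LieRing G where
  bracket := gb
  add_lie := by intro x y z; funext k; fin_cases k <;> simp only [gb, G.add_apply] <;> ring
  lie_add := by intro x y z; funext k; fin_cases k <;> simp only [gb, G.add_apply] <;> ring
  lie_self := by intro x; funext k; fin_cases k <;> simp only [gb, G.zero_apply] <;> ring
  leibniz_lie := by intro x y z; funext k; fin_cases k <;> simp only [gb, G.add_apply] <;> ring

lemma G.lie_def (u v : G) : ⁅u, v⁆ = gb u v := rfl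

instance : LieAlgebra ℝ G where
  lie_smul := by
    intro c x y; funext k
    rw [G.lie_def, G.lie_def]
    fin_cases k <;> simp only [gb, G.smul_apply] <;> ring

/-- basis vector `z` -/ def zv : G := Pi.single 0 1
/-- basis vector `b` -/ def bv : G := Pi.single 1 1
/-- basis vector `x₁` -/ def x1v : G := Pi.single 2 1
/-- basis vector `x₂` -/ def x2v : G := Pi.single 3 1
/-- basis vector `x₃` -/ def x3v : G := Pi.single 4 1
/-- basis vector `x₄` -/ def x4v : G := Pi.single 5 1
/-- basis vector `h` -/ def hv : G := Pi.single 6 1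
/-- basis vector `e` -/ def ev : G := Pi.single 7 1
/-- basis vector `f` -/ def fv : G := Pi.single 8 1


/-- The subalgebra `𝔰 = span{h, e, f}` (as a subspace of `𝔤`). -/
def Ssub : Submodule ℝ G := Submodule.span ℝ {hv, ev, fv}

/-- The quotient map `π : 𝔤 → 𝔪' = 𝔤/𝔰`. -/
def prS : G →ₗ[ℝ] G ⧸ Ssub := Ssub.mkQ

/-!
Over an ordered field an endomorphism `K` with `K² = -1` commuting with `T` preserves every
eigenspace of `T` and acts on it as a complex structure, so it cannot act on a line. The
isotropy action of `h` on `𝔤/𝔰` is diagonal with weights `0, 0, -3, -1, 1, 3` on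
`z, b, x₁, …, x₄`, so its `3`-eigenspace is the line spanned by `x₄ + 𝔰`.
-/

namespace Module.End

variable {𝕜 V : Type*} [Field 𝕜] [LinearOrder 𝕜] [IsStrictOrderedRing 𝕜]
  [AddCommGroup V] [Module 𝕜 V]

theorem mul_self_ne_neg_one_of_commute {K T : End 𝕜 V} (hKT : Commute K T) {μ : 𝕜} {v : V}
    (hvμ : v ∈ T.eigenspace μ) (hv0 : v ≠ 0) (hle : T.eigenspace μ ≤ 𝕜 ∙ v) :
    K * K ≠ -1 := by
  intro hK
  rw [mem_eigenspace_iff] at hvμ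
  have hKv : K v ∈ T.eigenspace μ := by
    rw [mem_eigenspace_iff, ← mul_apply, ← hKT.eq, mul_apply, hvμ, map_smul]
  obtain ⟨c, hc⟩ := Submodule.mem_span_singleton.mp (hle hKv)
  have hsq : (c * c + 1) • v = 0 := by
    have hKKv : K (K v) = -v := by rw [← mul_apply, hK]; rfl
    rw [← hc, map_smul, ← hc, smul_smul] at hKKv
    rw [add_smul, one_smul, hKKv, neg_add_cancel]
  have hc : c * c + 1 ≠ 0 := (add_pos_of_nonneg_of_pos (mul_self_nonneg c) one_pos).ne'
  exact hv0 ((smul_eq_zero.mp hsq).resolve_left hc)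

end Module.End

lemma G.sub_apply (u v : G) (k : Fin 9) : (u - v) k = u k - v k := rfl

lemma mem_Ssub_iff (u : G) :
    u ∈ Ssub ↔ u 0 = 0 ∧ u 1 = 0 ∧ u 2 = 0 ∧ u 3 = 0 ∧ u 4 = 0 ∧ u 5 = 0 := by
  constructor
  · intro hu
    induction hu using Submodule.span_induction with
    | mem x hx =>
      simp only [Set.mem_insert_iff, Set.mem_singleton_iff] at hx
      rcases hx with rfl | rfl | rfl <;> simp [hv, ev, fv]
    | zero => simp
    | add x y _ _ hx hy => simp_all
    | smul c x _ hx => simp_all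
  · rintro ⟨h0, h1, h2, h3, h4, h5⟩
    have hu : u = u 6 • hv + u 7 • ev + u 8 • fv := by
      funext k
      simp only [G.add_apply, G.smul_apply]
      fin_cases k <;> simp [hv, ev, fv, h0, h1, h2, h3, h4, h5]
    rw [hu]
    refine add_mem (add_mem ?_ ?_) ?_ <;>
      exact Submodule.smul_mem _ _ (Submodule.subset_span (by simp))

lemma prS_eq_prS_iff (u v : G) :
    prS u = prS v ↔ u 0 = v 0 ∧ u 1 = v 1 ∧ u 2 = v 2 ∧ u 3 = v 3 ∧ u 4 = v 4 ∧ u 5 = v 5 := by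
  simp only [prS, Submodule.mkQ_apply, Submodule.Quotient.eq, mem_Ssub_iff, G.sub_apply,
    sub_eq_zero]

lemma hv_mem_Ssub : hv ∈ Ssub := Submodule.subset_span (by simp)

def hWeight : Fin 9 → ℝ := ![0, 0, -3, -1, 1, 3, 0, 2, -2]

lemma lie_hv_apply (u : G) (k : Fin 9) : ⁅hv, u⁆ k = hWeight k * u k := by
  rw [G.lie_def]
  fin_cases k <;> simp [gb, hv, hWeight]

lemma Ssub_le_comap_ad_hv : Ssub ≤ Ssub.comap (LieAlgebra.ad ℝ G hv) := by
  intro u hu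
  simp_all [mem_Ssub_iff, lie_hv_apply]

/-- The isotropy representation `ρ'(h)` of `h` on `𝔤/𝔰`. -/
def isotropyH : Module.End ℝ (G ⧸ Ssub) :=
  Ssub.mapQ Ssub (LieAlgebra.ad ℝ G hv) Ssub_le_comap_ad_hv

lemma isotropyH_prS (v : G) : isotropyH (prS v) = prS ⁅hv, v⁆ := rfl

lemma commute_isotropyH {K : Module.End ℝ (G ⧸ Ssub)}
    (hK : ∀ v w : G, K (prS v) = prS w → K (prS ⁅hv, v⁆) = prS ⁅hv, w⁆) :
    Commute K isotropyH := by
  refine LinearMap.ext fun q => ?_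
  obtain ⟨v, rfl⟩ : ∃ v, prS v = q := Ssub.mkQ_surjective q
  obtain ⟨w, hw⟩ : ∃ w, prS w = K (prS v) := Ssub.mkQ_surjective _
  rw [Module.End.mul_apply, Module.End.mul_apply, isotropyH_prS, ← hw, isotropyH_prS]
  exact hK v w hw.symm

lemma prS_x4v_ne_zero : prS x4v ≠ 0 := by
  rw [← map_zero prS, Ne, prS_eq_prS_iff]
  simp [x4v]

lemma prS_x4v_mem_eigenspace : prS x4v ∈ isotropyH.eigenspace 3 := by
  rw [Module.End.mem_eigenspace_iff, isotropyH_prS, ← map_smul, prS_eq_prS_iff]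
  simp only [lie_hv_apply, G.smul_apply]
  simp [hWeight, x4v]

lemma eigenspace_isotropyH_three_le : isotropyH.eigenspace 3 ≤ ℝ ∙ prS x4v := by
  intro q hq
  obtain ⟨w, rfl⟩ : ∃ w, prS w = q := Ssub.mkQ_surjective q
  rw [Module.End.mem_eigenspace_iff, isotropyH_prS, ← map_smul, prS_eq_prS_iff] at hq
  refine Submodule.mem_span_singleton.mpr ⟨w 5, ?_⟩
  rw [← map_smul, prS_eq_prS_iff]
  simp only [lie_hv_apply, G.smul_apply] at hq ⊢
  simp [hWeight, x4v] at hq ⊢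
  obtain ⟨h0, h1, h2, h3, h4⟩ := hq
  exact ⟨h0.symm, h1.symm, by linarith, by linarith, by linarith⟩

/-- The quotient `𝔪' = 𝔤/𝔰` by the subalgebra `𝔰 = span{h, e, f}`
admits no `𝔰`-invariant almost complex structure: there is no linear endomorphism `K`
of `𝔪'` with `K² = −id` commuting with the isotropy representation
`ρ'(X)(v + 𝔰) = [X,v] + 𝔰` for all `X ∈ 𝔰`. -/
theorem stmt12 :
    ¬ ∃ K : Module.End ℝ (G ⧸ Ssub),
        K ∘ₗ K = -LinearMap.id ∧
        (∀ X ∈ Ssub, ∀ v w : G, K (prS v) = prS w → K (prS ⁅X, v⁆) = prS ⁅X, w⁆) := by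
  rintro ⟨K, hK, hcomm⟩
  exact Module.End.mul_self_ne_neg_one_of_commute (commute_isotropyH (hcomm hv hv_mem_Ssub))
    prS_x4v_mem_eigenspace prS_x4v_ne_zero eigenspace_isotropyH_three_le hK
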